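/- arXiv:2101.07245 — 4 statements merged into one kernel-verified Lean document; each statement's English description precedes it below -/
import Mathlib

section
/- Let V and W be finite-dimensional vector spaces over an infinite field k, and let α, β : V → W be linear maps such that β(ker α) ∩ im α = {0}. Then for all but finitely many scalars t ∈ k (i.e., for generic t), the map α + t·β has kernel equal to ker α ∩ ker β. -/
/-- Kronecker/perturbation lemma: if `β (ker α) ⊓ range α = ⊥`, then for all but
finitely many `t`, `ker (α + t • β) = ker α ⊓ ker β`. -/
theorem stmt0 {k V W : Type*} [Field k] [Infinite k]
    [AddCommGroup V] [Module k V] [FiniteDimensional k V]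
    [AddCommGroup W] [Module k W] [FiniteDimensional k W]
    (α β : V →ₗ[k] W)
    (h : (LinearMap.ker α).map β ⊓ LinearMap.range α = ⊥) :
    {t : k | LinearMap.ker (α + t • β) ≠ LinearMap.ker α ⊓ LinearMap.ker β}.Finite := by
  classical
  -- U = β⁻¹ (range α)
  set U : Submodule k V := (LinearMap.range α).comap β with hUdef
  set α₁ : ↥U →ₗ[k] W := α.comp U.subtype with hα₁
  set β₁ : ↥U →ₗ[k] W := β.comp U.subtype with hβ₁
  have hker : LinearMap.ker α₁ ≤ LinearMap.ker β₁ := by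
    rintro ⟨v, hv⟩ hv0
    have hva : α v = 0 := hv0
    have hmem : β v ∈ (LinearMap.ker α).map β ⊓ LinearMap.range α :=
      ⟨⟨v, hva, rfl⟩, hv⟩
    rw [h] at hmem
    exact hmem
  obtain ⟨Q, hQ⟩ := Submodule.exists_isCompl (LinearMap.range α₁)
  set π : W →ₗ[k] ↥(LinearMap.range α₁) :=
    (LinearMap.range α₁).linearProjOfIsCompl Q hQ with hπ
  set e := α₁.quotKerEquivRange with he
  set φ : (↥U ⧸ LinearMap.ker α₁) →ₗ[k] W := (LinearMap.ker α₁).liftQ β₁ hker with hφ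
  set γ : W →ₗ[k] W := φ ∘ₗ (e.symm.toLinearMap ∘ₗ π) with hγdef
  have hγ : ∀ u : ↥U, γ (α₁ u) = β₁ u := by
    intro u
    have hmem : α₁ u ∈ LinearMap.range α₁ := LinearMap.mem_range_self _ u
    have h1 : π (α₁ u) = ⟨α₁ u, hmem⟩ :=
      Submodule.linearProjOfIsCompl_apply_left hQ ⟨α₁ u, hmem⟩
    have h2 : e (Submodule.Quotient.mk u) = ⟨α₁ u, hmem⟩ := by
      apply Subtype.ext
      exact α₁.quotKerEquivRange_apply_mk u
    have h3 : e.symm ⟨α₁ u, hmem⟩ = Submodule.Quotient.mk u := by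
      rw [← h2, LinearEquiv.symm_apply_apply]
    show φ (e.symm (π (α₁ u))) = β₁ u
    rw [h1, h3]
    exact Submodule.liftQ_apply _ _ _
  set Eig : Set k := Module.End.HasEigenvalue (γ : Module.End k W) with hEig
  have hEigFin : Eig.Finite := Module.End.finite_hasEigenvalue (γ : Module.End k W)
  apply Set.Finite.subset ((hEigFin.image fun μ => -μ⁻¹).insert 0)
  intro t ht
  by_contra htmem
  apply ht
  rw [Set.mem_insert_iff] at htmem
  push_neg at htmem
  obtain ⟨ht0, htE⟩ := htmem
  -- t ≠ 0 and -t⁻¹ is not an eigenvalue of γ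
  have hnotEig : ¬ Module.End.HasEigenvalue (γ : Module.End k W) (-t⁻¹) := by
    intro hE
    exact htE ⟨-t⁻¹, hE, show -(-t⁻¹)⁻¹ = t by rw [inv_neg, neg_neg, inv_inv]⟩
  have hinj : ∀ x : W, x + t • γ x = 0 → x = 0 := by
    intro x hx
    by_contra hx0
    apply hnotEig
    apply Module.End.hasEigenvalue_of_hasEigenvector (x := x)
    refine ⟨Module.End.mem_eigenspace_iff.2 ?_, hx0⟩
    have h1 : t • γ x = -x := by
      have := hx
      linear_combination (norm := module) this
    calc (γ : Module.End k W) x = t⁻¹ • (t • γ x) := by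
          rw [smul_smul, inv_mul_cancel₀ ht0, one_smul]
      _ = (-t⁻¹) • x := by rw [h1, smul_neg, neg_smul]
  ext v
  simp only [LinearMap.mem_ker, LinearMap.add_apply, LinearMap.smul_apply,
    Submodule.mem_inf]
  constructor
  · intro hv
    -- β v ∈ range α
    have hβv : β v = α (-(t⁻¹ • v)) := by
      have h1 : t • β v = -α v := by linear_combination (norm := module) hv
      rw [map_neg, map_smul]
      calc β v = t⁻¹ • (t • β v) := by
            rw [smul_smul, inv_mul_cancel₀ ht0, one_smul]
        _ = -(t⁻¹ • α v) := by rw [h1, smul_neg]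
    have hvU : v ∈ U := by
      show β v ∈ LinearMap.range α
      exact hβv ▸ LinearMap.mem_range_self α _
    set u : ↥U := ⟨v, hvU⟩ with hu
    have h2 : α₁ u + t • γ (α₁ u) = 0 := by
      rw [hγ u]
      show α v + t • β v = 0
      exact hv
    have h3 : α v = 0 := hinj _ h2
    refine ⟨h3, ?_⟩
    have hmem : β v ∈ (LinearMap.ker α).map β ⊓ LinearMap.range α :=
      ⟨⟨v, h3, rfl⟩, hvU⟩
    rw [h] at hmem
    exact hmem
  · rintro ⟨h1, h2⟩
    rw [h1, h2, smul_zero, add_zero]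
end

section
/- Let V and W be finite-dimensional vector spaces over an infinite field k and α, β : V → W linear maps with β(ker α) ∩ im α = {0}. Then for generic t ∈ k, rank(α + t·β) = rank α + rank(β restricted to ker α). -/
/-!
Choose a complement `K'` of `K = ker α` and put `B = β K`. For `t ≠ 0` the map `α + t • β` sends
`K` onto `B`, so its rank is `dim K' + dim B = rank α + dim B` as soon as the composite
`K' → W → W ⧸ B` of `α + t • β` is injective. That composite is a pencil `f + t • g` with
`f` injective (because `B ⊓ range α = ⊥`), and if `L` is a left inverse of `f`, a kernel vector
of `f + t • g` is an eigenvector of `L ∘ g` for the eigenvalue `-t⁻¹`; there are only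
finitely many of those.
-/

open Module LinearMap Submodule Function

section
variable {k V W : Type*} [Field k] [AddCommGroup V] [Module k V] [AddCommGroup W] [Module k W]

theorem LinearMap.finite_setOf_not_injective_add_smul [FiniteDimensional k V] {f : V →ₗ[k] W}
    (hf : Injective f) (g : V →ₗ[k] W) : {t : k | ¬ Injective (f + t • g)}.Finite := by
  obtain ⟨L, hL⟩ := f.exists_leftInverse_of_injective (ker_eq_bot.mpr hf)
  refine ((End.finite_hasEigenvalue (L ∘ₗ g)).image fun μ => -μ⁻¹).subset ?_
  intro t ht
  obtain ⟨x, hx, hx0⟩ : ∃ x, (f + t • g) x = 0 ∧ x ≠ 0 := by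
    simpa [injective_iff_map_eq_zero] using ht
  have ht0 : t ≠ 0 := by
    rintro rfl
    exact hx0 (hf (by simpa using hx))
  have hLx : x + t • (L ∘ₗ g) x = 0 := by
    simpa [← LinearMap.comp_apply L f, hL] using congrArg L hx
  have heig : (L ∘ₗ g) x = (-t⁻¹) • x := by
    rw [neg_smul, eq_neg_iff_add_eq_zero, ← inv_smul_smul₀ ht0 ((L ∘ₗ g) x), ← smul_add,
      add_comm, hLx, smul_zero]
  exact ⟨-t⁻¹, End.hasEigenvalue_of_hasEigenvector ⟨End.mem_eigenspace_iff.mpr heig, hx0⟩, by simp⟩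

theorem LinearMap.finrank_range_eq_of_injective_mkQ_comp [FiniteDimensional k V] {f : V →ₗ[k] W}
    {K K' : Submodule k V} (hK : IsCompl K K')
    (hf : Injective ((K.map f).mkQ ∘ₗ f ∘ₗ K'.subtype)) :
    finrank k (range f) = finrank k K' + finrank k (K.map f) := by
  have hdisj : Disjoint (K'.map f) (K.map f) := by
    rw [disjoint_iff, eq_bot_iff]
    rintro _ ⟨⟨x, hx, rfl⟩, hfx⟩
    have : (⟨x, hx⟩ : K') = 0 := hf (by simpa [Submodule.Quotient.mk_eq_zero] using hfx)
    simp [show x = 0 from congrArg Subtype.val this]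
  have hinj : Injective (f ∘ₗ K'.subtype) := .of_comp (f := (K.map f).mkQ) hf
  have hrange : range f = K'.map f ⊔ K.map f := by
    rw [range_eq_map, ← hK.sup_eq_top, Submodule.map_sup, sup_comm]
  have hK' : finrank k (K'.map f) = finrank k K' := by
    rw [← finrank_range_of_inj hinj, range_comp, range_subtype]
  rw [hrange, ← add_zero (finrank k _), ← finrank_bot k W, ← hdisj.eq_bot,
    finrank_sup_add_finrank_inf_eq, hK']

theorem LinearMap.finrank_eq_finrank_range_of_isCompl_ker [FiniteDimensional k V]
    {α : V →ₗ[k] W} {K' : Submodule k V} (hK' : IsCompl (ker α) K') :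
    finrank k K' = finrank k (range α) :=
  ((quotientEquivOfIsCompl _ _ hK').symm.trans α.quotKerEquivRange).finrank_eq

theorem LinearMap.injective_mkQ_comp_subtype_of_isCompl_ker {α : V →ₗ[k] W}
    {K' : Submodule k V} (hK' : IsCompl (ker α) K') {B : Submodule k W}
    (hB : Disjoint B (range α)) : Injective (B.mkQ ∘ₗ α ∘ₗ K'.subtype) := by
  rw [injective_iff_map_eq_zero]
  rintro ⟨x, hx⟩ hαx
  have hαx : α x ∈ B ⊓ range α := ⟨by simpa [Submodule.Quotient.mk_eq_zero] using hαx, x, rfl⟩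
  rw [hB.eq_bot, mem_bot, ← mem_ker] at hαx
  simpa using hK'.disjoint.le_bot ⟨hαx, hx⟩

theorem LinearMap.map_ker_add_smul (α β : V →ₗ[k] W) {t : k} (ht : t ≠ 0) :
    (ker α).map (α + t • β) = range (β ∘ₗ (ker α).subtype) :=
  calc (ker α).map (α + t • β) = range ((α + t • β) ∘ₗ (ker α).subtype) := by
        rw [range_comp, range_subtype]
    _ = range (t • (β ∘ₗ (ker α).subtype)) := by
        rw [add_comp, comp_ker_subtype, zero_add, smul_comp]
    _ = range (β ∘ₗ (ker α).subtype) := range_smul _ _ ht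

end

theorem stmt1_general {k V W : Type*} [Field k]
    [AddCommGroup V] [Module k V] [FiniteDimensional k V]
    [AddCommGroup W] [Module k W]
    (α β : V →ₗ[k] W)
    (h : (LinearMap.ker α).map β ⊓ LinearMap.range α = ⊥) :
    {t : k | Module.finrank k (LinearMap.range (α + t • β)) ≠
        Module.finrank k (LinearMap.range α) +
        Module.finrank k (LinearMap.range (β ∘ₗ (LinearMap.ker α).subtype))}.Finite := by
  obtain ⟨K', hK'⟩ := (ker α).exists_isCompl
  have hB : Disjoint (range (β ∘ₗ (ker α).subtype)) (range α) := by
    rwa [range_comp, range_subtype, disjoint_iff]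
  set B := range (β ∘ₗ (ker α).subtype)
  have hinj := injective_mkQ_comp_subtype_of_isCompl_ker hK' hB
  refine ((finite_setOf_not_injective_add_smul hinj (B.mkQ ∘ₗ β ∘ₗ K'.subtype)).insert 0).subset
    fun t ht => ?_
  by_contra hgood
  simp only [Set.mem_insert_iff, Set.mem_ofPred_eq, not_or, not_not] at hgood
  obtain ⟨ht0, htinj⟩ := hgood
  have hpencil : Injective (((ker α).map (α + t • β)).mkQ ∘ₗ (α + t • β) ∘ₗ K'.subtype) := by
    rw [map_ker_add_smul α β ht0]
    convert htinj using 2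
    ext
    simp
  apply ht
  rw [finrank_range_eq_of_injective_mkQ_comp hK' hpencil, map_ker_add_smul α β ht0,
    finrank_eq_finrank_range_of_isCompl_ker hK']

/-- Quantitative perturbation lemma: if `β (ker α) ⊓ range α = ⊥`, then for generic `t`,
`rank (α + t • β) = rank α + rank (β restricted to ker α)`. -/
theorem stmt1 {k V W : Type*} [Field k] [Infinite k]
    [AddCommGroup V] [Module k V] [FiniteDimensional k V]
    [AddCommGroup W] [Module k W] [FiniteDimensional k W]
    (α β : V →ₗ[k] W)
    (h : (LinearMap.ker α).map β ⊓ LinearMap.range α = ⊥) :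
    {t : k | Module.finrank k (LinearMap.range (α + t • β)) ≠
        Module.finrank k (LinearMap.range α) +
        Module.finrank k (LinearMap.range (β ∘ₗ (LinearMap.ker α).subtype))}.Finite :=
  stmt1_general α β h
end

section
/- Let B ⊆ B' be an inclusion of Poincaré duality algebras of socle degree d = 2k over k, compatible with degree maps, and suppose B'^k = B^k ⊕ G orthogonally (with respect to the middle pairing on B'). Let I ⊆ B be a homogeneous ideal generated in B, and suppose I'^k = I^k ⊕ G inside B'^k for an ideal I' of B'. Then the middle pairing on I^k is nondegenerate if and only if the middle pairing on I'^k is nondegenerate. -/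
/-- Subdivision invariance of biased pairing (abstract form): given an inclusion
`φ : B → B'` of Poincaré duality algebras of socle degree `d = 2k` compatible with the
degree maps, with orthogonal decompositions `B'^k = φ(B^k) ⊕ G` and `I'^k = φ(I^k) ⊕ G`,
the middle pairing on `I^k` is nondegenerate iff the middle pairing on `I'^k` is. -/
theorem stmt13 {k B B' : Type*} [Field k] [CommRing B] [Algebra k B]
    [CommRing B'] [Algebra k B'] [FiniteDimensional k B] [FiniteDimensional k B']
    (𝒜 : ℕ → Submodule k B) [GradedAlgebra 𝒜]
    (𝒝 : ℕ → Submodule k B') [GradedAlgebra 𝒝]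
    (kk d : ℕ) (hd : d = 2 * kk) (deg : B →ₗ[k] k) (deg' : B' →ₗ[k] k)
    (hPD : ∀ j : ℕ, j ≤ d → ∀ a ∈ 𝒜 j, (∀ b ∈ 𝒜 (d - j), deg (a * b) = 0) → a = 0)
    (hPD' : ∀ j : ℕ, j ≤ d → ∀ a ∈ 𝒝 j, (∀ b ∈ 𝒝 (d - j), deg' (a * b) = 0) → a = 0)
    (φ : B →ₐ[k] B') (hinj : Function.Injective φ)
    (hgr : ∀ i : ℕ, ∀ a ∈ 𝒜 i, φ a ∈ 𝒝 i)
    (hdeg : ∀ a ∈ 𝒜 d, deg' (φ a) = deg a)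
    (G : Submodule k B') (hG : G ≤ 𝒝 kk)
    -- orthogonality of `G` against `φ(B^k)`
    (horth : ∀ g ∈ G, ∀ b ∈ 𝒜 kk, deg' (φ b * g) = 0)
    -- `B'^k = φ(B^k) ⊕ G`
    (hdec : ∀ y ∈ 𝒝 kk, ∃ b, b ∈ 𝒜 kk ∧ ∃ g ∈ G, y = φ b + g)
    (hdir : ∀ b ∈ 𝒜 kk, φ b ∈ G → φ b = 0)
    (I : Ideal B) (hI : Ideal.IsHomogeneous 𝒜 I)
    (I' : Ideal B') (hI' : Ideal.IsHomogeneous 𝒝 I')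
    -- `I'^k = φ(I^k) ⊕ G`
    (hIdec : ∀ y, (y ∈ I' ∧ y ∈ 𝒝 kk) ↔
      ∃ x, x ∈ I ∧ x ∈ 𝒜 kk ∧ ∃ g ∈ G, y = φ x + g) :
    -- nondegeneracy of the middle pairing on `I^k` iff on `I'^k`
    ((∀ x, x ∈ I → x ∈ 𝒜 kk →
        (∀ y, y ∈ I → y ∈ 𝒜 kk → deg (x * y) = 0) → x = 0) ↔
      (∀ x, x ∈ I' → x ∈ 𝒝 kk →
        (∀ y, y ∈ I' → y ∈ 𝒝 kk → deg' (x * y) = 0) → x = 0)) := by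
  have hkk : kk + kk = d := by omega
  have hkd : kk ≤ d := by omega
  have hdk : d - kk = kk := by omega
  have key : ∀ a ∈ 𝒜 kk, ∀ b ∈ 𝒜 kk, deg' (φ a * φ b) = deg (a * b) := by
    intro a ha b hb
    rw [← map_mul]
    exact hdeg _ (hkk ▸ SetLike.mul_mem_graded ha hb)
  have hGsub : ∀ g ∈ G, g ∈ I' := by
    intro g hg
    exact ((hIdec g).mpr ⟨0, I.zero_mem, (𝒜 kk).zero_mem, g, hg, by simp⟩).1
  constructor
  · intro h x' hx'I hx'B hperp
    obtain ⟨x, hxI, hxA, g, hgG, rfl⟩ := (hIdec x').mp ⟨hx'I, hx'B⟩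
    have hx0 : x = 0 := by
      apply h x hxI hxA
      intro y hyI hyA
      have hy' : φ y ∈ I' ∧ φ y ∈ 𝒝 kk :=
        (hIdec (φ y)).mpr ⟨y, hyI, hyA, 0, G.zero_mem, by simp⟩
      have hthis := hperp (φ y) hy'.1 hy'.2
      have hg0 : deg' (g * φ y) = 0 := by rw [mul_comm]; exact horth g hgG y hyA
      rwa [add_mul, map_add, key x hxA y hyA, hg0, add_zero] at hthis
    subst hx0
    simp only [map_zero, zero_add] at hperp ⊢
    apply hPD' kk hkd g (hG hgG)
    intro b hb
    rw [hdk] at hb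
    obtain ⟨c, hc, h2, hh2, rfl⟩ := hdec b hb
    have h1 : deg' (g * φ c) = 0 := by rw [mul_comm]; exact horth g hgG c hc
    have h2' : deg' (g * h2) = 0 := hperp h2 (hGsub h2 hh2) (hG hh2)
    rw [mul_add, map_add, h1, h2', add_zero]
  · intro h x hxI hxA hperp
    have hx' : φ x ∈ I' ∧ φ x ∈ 𝒝 kk :=
      (hIdec (φ x)).mpr ⟨x, hxI, hxA, 0, G.zero_mem, by simp⟩
    have hx0 : φ x = 0 := by
      apply h (φ x) hx'.1 hx'.2
      intro y' hy'I hy'B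
      obtain ⟨y, hyI, hyA, g, hgG, rfl⟩ := (hIdec y').mp ⟨hy'I, hy'B⟩
      rw [mul_add, map_add, key x hxA y hyA, hperp y hyI hyA, horth g hgG x hxA, add_zero]
    exact hinj (by simpa using hx0)
end

section
/- Let B be a Poincaré duality algebra of socle degree d over an infinite field k, generated in degree one by x₁,…,xₙ, and fix k < d/2 with the following property: for every subset W ⊆ {1,…,n} already satisfying ker(∑_{v∈W} t_v x_v : B^k → B^{k+1}) = ⋂_{v∈W} ker(x_v) for generic coefficients t_v, and every additional index w, the spaces x_w·(⋂_{v∈W} ker x_v) and im(generic ∑_{v∈W} t_v x_v) ∩ ⟨x_w⟩ intersect only in 0 (in B^{k+1}). Then a generic linear combination ℓ = ∑_v t_v x_v is injective as a map B^k → B^{k+1}. -/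
/-- A property `P` of coefficient vectors holds generically if it holds outside the zero
set of some nonzero polynomial. -/
def GenericHolds {k : Type*} [Field k] {n : ℕ} (P : (Fin n → k) → Prop) : Prop :=
  ∃ p : MvPolynomial (Fin n) k, p ≠ 0 ∧ ∀ t : Fin n → k, MvPolynomial.eval t p ≠ 0 → P t

/-!
Induct on `W`, keeping the property that for generic `t` the kernel of `∑_{v ∈ W} t_v x_v` on
`B^k` is the common kernel `⋂_{v ∈ W} ker x_v`. This property is Zariski open in `t`: it says
that `∑ t_v x_v` is injective on a complement of the common kernel, i.e. that a certain minor
does not vanish. So for `W ∪ {w}` one good `t` suffices, and it is provided by the Kronecker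
perturbation lemma: if `ker ℓ ≤ K` and `a(K) ∩ im ℓ = 0`, then `ker (s a + ℓ) ≤ K ∩ ker a`
for some scalar `s`. Otherwise kernel vectors `u_s` for `dim + 1` values of `s` are linearly
dependent, and combining them with nodal polynomials gives a polynomial `U(X)` with
`(ℓ + X a) U = 0`; chasing its coefficients puts them all in `K ∩ ker a`, and with them a `u_s`
of nonzero weight. For `W = univ` the common kernel vanishes by Poincaré duality, since every
element of positive degree lies in the ideal generated by the `x_v`.
-/

open LinearMap (ker)

namespace GenericHolds

variable {k : Type*} [Field k] {n : ℕ} {P Q : (Fin n → k) → Prop}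

theorem mono (h : GenericHolds P) (hPQ : ∀ t, P t → Q t) : GenericHolds Q :=
  let ⟨p, hp, hP⟩ := h
  ⟨p, hp, fun t ht => hPQ t (hP t ht)⟩

theorem and (hP : GenericHolds P) (hQ : GenericHolds Q) : GenericHolds fun t => P t ∧ Q t := by
  obtain ⟨p, hp, hP⟩ := hP
  obtain ⟨q, hq, hQ⟩ := hQ
  refine ⟨p * q, mul_ne_zero hp hq, fun t ht => ?_⟩
  rw [map_mul] at ht
  exact ⟨hP t (left_ne_zero_of_mul ht), hQ t (right_ne_zero_of_mul ht)⟩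

theorem exists_of_infinite [Infinite k] (h : GenericHolds P) : ∃ t, P t := by
  obtain ⟨p, hp, hP⟩ := h
  obtain ⟨t, ht⟩ : ∃ t, MvPolynomial.eval t p ≠ 0 := by
    by_contra! h
    exact hp (MvPolynomial.funext fun t => by simpa using h t)
  exact ⟨t, hP t ht⟩

end GenericHolds

theorem LinearMap.ker_le_iff_injective_domRestrict {R M N : Type*} [Ring R] [AddCommGroup M]
    [Module R M] [AddCommGroup N] [Module R N] {g : M →ₗ[R] N} {K C : Submodule R M}
    (hKC : IsCompl K C) (hK : K ≤ ker g) : ker g ≤ K ↔ Function.Injective (g.domRestrict C) := by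
  rw [LinearMap.injective_domRestrict_iff]
  refine ⟨fun h => hKC.disjoint.symm.mono_right h, fun h => ?_⟩
  have := sup_inf_assoc_of_le C hK
  rw [hKC.sup_eq_top, top_inf_eq, h.eq_bot, sup_bot_eq] at this
  exact this.le

section GenericKernel

variable {k M N : Type*} [Field k] [AddCommGroup M] [Module k M] [AddCommGroup N] [Module k N]
  {n : ℕ}

theorem genericHolds_injective_sum_smul [FiniteDimensional k M] (f : Fin n → M →ₗ[k] N)
    (W : Finset (Fin n)) {t₀ : Fin n → k} (h₀ : Function.Injective ⇑(∑ v ∈ W, t₀ v • f v)) :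
    GenericHolds fun t : Fin n → k => Function.Injective ⇑(∑ v ∈ W, t v • f v) := by
  obtain ⟨r, hr⟩ := LinearMap.exists_leftInverse_of_injective _ (LinearMap.ker_eq_bot.mpr h₀)
  let b := Module.finBasis k M
  let p : MvPolynomial (Fin n) k := Matrix.det <| Matrix.of fun i j =>
    ∑ v ∈ W, MvPolynomial.C (LinearMap.toMatrix b b (r ∘ₗ f v) i j) * MvPolynomial.X v
  have heval : ∀ t, MvPolynomial.eval t p = LinearMap.det (r ∘ₗ ∑ v ∈ W, t v • f v) := by
    intro t
    rw [← LinearMap.det_toMatrix b, RingHom.map_det]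
    congr 1
    ext i j
    simp [LinearMap.toMatrix_apply, mul_comm]
  refine ⟨p, fun hp => ?_, fun t ht => ?_⟩
  · simpa [hp, hr] using heval t₀
  · rw [heval, ← isUnit_iff_ne_zero, ← LinearMap.isUnit_iff_isUnit_det] at ht
    have := ((Module.End.isUnit_iff _).mp ht).injective
    rw [LinearMap.coe_comp] at this
    exact this.of_comp

theorem genericHolds_ker_sum_smul_le [FiniteDimensional k M] (f : Fin n → M →ₗ[k] N)
    (W : Finset (Fin n)) (K : Submodule k M) (hK : ∀ v ∈ W, K ≤ ker (f v)) {t₀ : Fin n → k}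
    (h₀ : ker (∑ v ∈ W, t₀ v • f v) ≤ K) :
    GenericHolds fun t : Fin n → k => ker (∑ v ∈ W, t v • f v) ≤ K := by
  obtain ⟨C, hKC⟩ := K.exists_isCompl
  have key : ∀ t : Fin n → k, ker (∑ v ∈ W, t v • f v) ≤ K ↔
      Function.Injective ⇑(∑ v ∈ W, t v • (f v).domRestrict C) := fun t => by
    have hsum : ∑ v ∈ W, t v • (f v).domRestrict C = (∑ v ∈ W, t v • f v).domRestrict C := by
      ext; simp
    rw [hsum]
    refine LinearMap.ker_le_iff_injective_domRestrict hKC fun u hu => ?_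
    rw [LinearMap.mem_ker, LinearMap.sum_apply]
    exact Finset.sum_eq_zero fun v hv => by rw [LinearMap.smul_apply, hK v hv hu, smul_zero]
  exact (genericHolds_injective_sum_smul _ W ((key t₀).mp h₀)).mono fun t => (key t).mpr

end GenericKernel

section Kronecker

variable {k M N : Type*} [Field k] [AddCommGroup M] [Module k M] [AddCommGroup N] [Module k N]
  {ℓ a : M →ₗ[k] N} {K : Submodule k M}

theorem mem_inf_ker_of_chain (hℓ : ker ℓ ≤ K) (htr : ∀ u ∈ K, ∀ u', a u = ℓ u' → a u = 0)
    {c : ℕ → M} (h0 : ℓ (c 0) = 0) (hc : ∀ m, ℓ (c (m + 1)) + a (c m) = 0) (m : ℕ) :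
    c m ∈ K ⊓ ker a := by
  have hstep : ∀ m, ℓ (c m) = 0 → c m ∈ K ⊓ ker a := fun m hm => by
    have hK : c m ∈ K := hℓ hm
    refine ⟨hK, htr _ hK (-c (m + 1)) ?_⟩
    rw [map_neg, eq_neg_iff_add_eq_zero, add_comm, hc]
  suffices ∀ m, ℓ (c m) = 0 from hstep m (this m)
  intro m
  induction m with
  | zero => exact h0
  | succ m ih => simpa [LinearMap.mem_ker.mp (hstep m ih).2] using hc m

open Polynomial

/-- The coefficients of the `M`-valued polynomial `∑ i, μ i • (∏_{j ≠ i} (X - s j)) • u i`. -/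
noncomputable def nodalCombination {ι : Type*} [Fintype ι] [DecidableEq ι] (s μ : ι → k) (u : ι → M)
    (m : ℕ) : M :=
  ∑ i, (μ i * (Lagrange.nodal (Finset.univ.erase i) s).coeff m) • u i

variable {ι : Type*} [Fintype ι] [DecidableEq ι] {s μ : ι → k} {u : ι → M}

theorem nodalCombination_chain (hu : ∀ i, (s i • a + ℓ) (u i) = 0) (hμ : ∑ i, μ i • u i = 0) :
    ℓ (nodalCombination s μ u 0) = 0 ∧
      ∀ m, ℓ (nodalCombination s μ u (m + 1)) + a (nodalCombination s μ u m) = 0 := by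
  let ω : ι → k[X] := fun i => Lagrange.nodal (Finset.univ.erase i) s
  have hℓu : ∀ i, ℓ (u i) = -(s i • a (u i)) := fun i =>
    eq_neg_of_add_eq_zero_right (by simpa using hu i)
  -- `(ℓ + X a) U = ∑ μ_i (X - s_i) ω_i a(u_i) = nodal univ s • a (∑ μ_i u_i) = 0`
  have hcoeff : ∀ m, ∑ i, (μ i * (ω i * (X - C (s i))).coeff m) • a (u i) = 0 := by
    intro m
    have hω : ∀ i, ω i * (X - C (s i)) = Lagrange.nodal Finset.univ s := fun i => by
      rw [mul_comm, ← Lagrange.nodal_eq_mul_nodal_erase (Finset.mem_univ i)]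
    simp_rw [hω, mul_comm (μ _), mul_smul, ← Finset.smul_sum, ← map_smul, ← map_sum, hμ,
      map_zero, smul_zero]
  refine ⟨?_, fun m => ?_⟩
  · rw [← hcoeff 0]
    simp only [nodalCombination, map_sum, map_smul, hℓu]
    refine Finset.sum_congr rfl fun i _ => ?_
    simp only [mul_coeff_zero, coeff_sub, coeff_X_zero, coeff_C_zero]
    module
  · rw [← hcoeff (m + 1)]
    simp only [nodalCombination, map_sum, map_smul, hℓu, ← Finset.sum_add_distrib]
    refine Finset.sum_congr rfl fun i _ => ?_
    rw [coeff_mul_X_sub_C]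
    module

theorem sum_pow_smul_nodalCombination (j : ι) :
    ∑ m ∈ Finset.range (Fintype.card ι), s j ^ m • nodalCombination s μ u m =
      (μ j * eval (s j) (Lagrange.nodal (Finset.univ.erase j) s)) • u j := by
  have hdeg : ∀ i, (Lagrange.nodal (Finset.univ.erase i) s).natDegree < Fintype.card ι :=
    fun i => by
      rw [Lagrange.natDegree_nodal, Finset.card_erase_of_mem (Finset.mem_univ i)]
      exact Nat.sub_lt (Finset.univ_nonempty_iff.mpr ⟨i⟩).card_pos one_pos
  have hcoeffs : ∀ i, ∑ m ∈ Finset.range (Fintype.card ι),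
      s j ^ m * (μ i * (Lagrange.nodal (Finset.univ.erase i) s).coeff m) =
        μ i * eval (s j) (Lagrange.nodal (Finset.univ.erase i) s) := fun i => by
    rw [eval_eq_sum_range' (hdeg i), Finset.mul_sum]
    exact Finset.sum_congr rfl fun m _ => by ring
  simp only [nodalCombination, Finset.smul_sum, smul_smul]
  rw [Finset.sum_comm]
  simp only [← Finset.sum_smul, hcoeffs]
  refine Finset.sum_eq_single j (fun i _ hij => ?_) (by simp)
  rw [Lagrange.eval_nodal_at_node (Finset.mem_erase.mpr ⟨hij.symm, Finset.mem_univ j⟩),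
    mul_zero, zero_smul]

theorem smul_mem_span_range_nodalCombination (hs : Function.Injective s) (j : ι) :
    μ j • u j ∈ Submodule.span k (Set.range (nodalCombination s μ u)) := by
  have hωj : eval (s j) (Lagrange.nodal (Finset.univ.erase j) s) ≠ 0 :=
    Lagrange.eval_nodal_not_at_node fun i hi => hs.ne (Finset.ne_of_mem_erase hi).symm
  rw [← Submodule.smul_mem_iff _ hωj, smul_smul, mul_comm, ← sum_pow_smul_nodalCombination]
  exact Submodule.sum_mem _ fun m _ =>
    Submodule.smul_mem _ _ (Submodule.subset_span (Set.mem_range_self m))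

theorem exists_ker_smul_add_le [Infinite k] [FiniteDimensional k M] (hℓ : ker ℓ ≤ K)
    (htr : ∀ u ∈ K, ∀ u', a u = ℓ u' → a u = 0) : ∃ s : k, ker (s • a + ℓ) ≤ K ⊓ ker a := by
  by_contra! hbad
  simp only [SetLike.not_le_iff_exists] at hbad
  choose u hu hL using hbad
  let s : Fin (Module.finrank k M + 1) → k := fun i => Infinite.natEmbedding k i
  have hs : Function.Injective s := (Infinite.natEmbedding k).injective.comp Fin.val_injective
  obtain ⟨μ, hμ, i, hi⟩ := Fintype.not_linearIndependent_iff.mp fun hli => by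
    simpa using (hli : LinearIndependent k (u ∘ s)).fintype_card_le_finrank
  obtain ⟨h0, hc⟩ := nodalCombination_chain (fun i => hu (s i)) hμ
  have hcL : Submodule.span k (Set.range (nodalCombination s μ (u ∘ s))) ≤ K ⊓ ker a :=
    Submodule.span_le.mpr (Set.range_subset_iff.mpr (mem_inf_ker_of_chain hℓ htr h0 hc))
  exact hL (s i) ((Submodule.smul_mem_iff _ hi).mp
    (hcL (smul_mem_span_range_nodalCombination hs i)))

end Kronecker

section Perturbation

variable {k M N : Type*} [Field k] [Infinite k] [AddCommGroup M] [Module k M]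
  [FiniteDimensional k M] [AddCommGroup N] [Module k N] {n : ℕ}

theorem genericHolds_ker_sum_smul_le_iInf_ker (f : Fin n → M →ₗ[k] N)
    (htrans : ∀ W : Finset (Fin n),
      GenericHolds (fun t : Fin n → k => ker (∑ v ∈ W, t v • f v) ≤ ⨅ v ∈ W, ker (f v)) →
      ∀ w, GenericHolds fun t : Fin n → k => ∀ u ∈ ⨅ v ∈ W, ker (f v), ∀ u',
        f w u = (∑ v ∈ W, t v • f v) u' → f w u = 0)
    (W : Finset (Fin n)) :
    GenericHolds fun t : Fin n → k => ker (∑ v ∈ W, t v • f v) ≤ ⨅ v ∈ W, ker (f v) := by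
  induction W using Finset.induction_on with
  | empty => exact ⟨1, one_ne_zero, fun t _ => by simp⟩
  | insert w W hw ih =>
    obtain ⟨t, hker, htr⟩ := (ih.and (htrans W ih w)).exists_of_infinite
    obtain ⟨s, hs⟩ := exists_ker_smul_add_le hker htr
    refine genericHolds_ker_sum_smul_le f _ _ (fun v hv => biInf_le _ hv)
      (t₀ := Function.update t w s) ?_
    have hsum : ∑ v ∈ insert w W, Function.update t w s v • f v = s • f w + ∑ v ∈ W, t v • f v := by
      rw [Finset.sum_insert hw, Function.update_self]
      congr 1
      exact Finset.sum_congr rfl fun v hv => by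
        rw [Function.update_of_ne (ne_of_mem_of_not_mem hv hw)]
    rw [hsum, Finset.iInf_insert, inf_comm]
    exact hs

end Perturbation

section GeneratedInDegreeOne

variable {k B : Type*} [Field k] [CommRing B] [Algebra k B] {ι : Type*} {x : ι → B}

theorem exists_sub_algebraMap_mem_span (hgen : Algebra.adjoin k (Set.range x) = ⊤) (b : B) :
    ∃ c : k, b - algebraMap k B c ∈ Ideal.span (Set.range x) := by
  let π := Ideal.Quotient.mkₐ k (Ideal.span (Set.range x))
  have hbot : Algebra.adjoin k (π '' Set.range x) ≤ ⊥ := Algebra.adjoin_le <| by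
    rintro _ ⟨_, ⟨i, rfl⟩, rfl⟩
    rw [SetLike.mem_coe, show π (x i) = 0 from
      Ideal.Quotient.eq_zero_iff_mem.mpr (Ideal.subset_span ⟨i, rfl⟩)]
    exact zero_mem _
  rw [Algebra.adjoin_image, hgen] at hbot
  obtain ⟨c, hc⟩ := Algebra.mem_bot.mp (hbot ⟨b, trivial, rfl⟩)
  refine ⟨c, Ideal.Quotient.eq_zero_iff_mem.mp ?_⟩
  simpa [π, sub_eq_zero] using hc.symm

variable (𝒜 : ℕ → Submodule k B) [GradedAlgebra 𝒜]

theorem mem_span_of_mem_graded (hx : ∀ i, SetLike.IsHomogeneousElem 𝒜 (x i))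
    (hgen : Algebra.adjoin k (Set.range x) = ⊤) {m : ℕ} (hm : m ≠ 0) {b : B} (hb : b ∈ 𝒜 m) :
    b ∈ Ideal.span (Set.range x) := by
  obtain ⟨c, hc⟩ := exists_sub_algebraMap_mem_span hgen b
  have := Ideal.homogeneous_span 𝒜 _ (Set.forall_mem_range.mpr hx) m hc
  rwa [DirectSum.decompose_sub, DirectSum.sub_apply, Submodule.coe_sub,
    DirectSum.decompose_of_mem_same 𝒜 hb,
    DirectSum.decompose_of_mem_ne 𝒜 (SetLike.algebraMap_mem_graded 𝒜 c) hm.symm, sub_zero] at this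

theorem eq_zero_of_forall_mul_eq_zero (deg : B →ₗ[k] k) {d j : ℕ}
    (hPD : ∀ a ∈ 𝒜 j, (∀ b ∈ 𝒜 (d - j), deg (a * b) = 0) → a = 0)
    (hx : ∀ i, SetLike.IsHomogeneousElem 𝒜 (x i)) (hgen : Algebra.adjoin k (Set.range x) = ⊤)
    (hjd : j < d) {u : B} (hu : u ∈ 𝒜 j) (hxu : ∀ i, x i * u = 0) : u = 0 := by
  refine hPD u hu fun b hb => ?_
  have hann : Ideal.span (Set.range x) ≤ LinearMap.ker (LinearMap.mulLeft B u) :=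
    Ideal.span_le.mpr <| Set.range_subset_iff.mpr fun i => by simp [mul_comm u, hxu i]
  have hub : u * b = 0 := hann (mem_span_of_mem_graded 𝒜 hx hgen (by omega) hb)
  rw [hub, map_zero]

end GeneratedInDegreeOne

/-- Building Lefschetz elements by the perturbation lemma: if the transversal prime
property can always be extended by one more vertex, then a generic linear combination
`ℓ = ∑ t_v x_v` is injective `B^k → B^{k+1}`. -/
theorem stmt15 {k B : Type*} [Field k] [Infinite k] [CommRing B] [Algebra k B]
    [FiniteDimensional k B]
    (𝒜 : ℕ → Submodule k B) [GradedAlgebra 𝒜]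
    (d : ℕ) (deg : B →ₗ[k] k)
    (hPD : ∀ j : ℕ, j ≤ d → ∀ a ∈ 𝒜 j, (∀ b ∈ 𝒜 (d - j), deg (a * b) = 0) → a = 0)
    {n : ℕ} (x : Fin n → B) (hx : ∀ i, x i ∈ 𝒜 1)
    (hgen : Algebra.adjoin k (Set.range x) = ⊤)
    (kk : ℕ) (hk : 2 * kk < d)
    -- transversal prime property: whenever the kernel of a generic combination over `W`
    -- is the common kernel, for each extra vertex `w` the spaces
    -- `x_w ⋅ (⋂_{v ∈ W} ker x_v)` and `im (generic ∑_{v ∈ W} t_v x_v) ∩ ⟨x_w⟩`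
    -- intersect trivially
    (htrans : ∀ W : Finset (Fin n),
      GenericHolds (fun t : Fin n → k => ∀ u ∈ 𝒜 kk,
        ((∑ v ∈ W, t v • x v) * u = 0 ↔ ∀ v ∈ W, x v * u = 0)) →
      ∀ w : Fin n,
        GenericHolds (fun t : Fin n → k => ∀ u u', u ∈ 𝒜 kk → u' ∈ 𝒜 kk →
          (∀ v ∈ W, x v * u = 0) →
          x w * u = (∑ v ∈ W, t v • x v) * u' → x w * u = 0)) :
    GenericHolds (fun t : Fin n → k => ∀ u ∈ 𝒜 kk,
      (∑ v : Fin n, t v • x v) * u = 0 → u = 0) := by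
  let f : Fin n → 𝒜 kk →ₗ[k] B := fun v => (LinearMap.mulLeft k (x v)).domRestrict (𝒜 kk)
  have happly : ∀ (W : Finset (Fin n)) (t : Fin n → k) (u : 𝒜 kk),
      (∑ v ∈ W, t v • f v) u = (∑ v ∈ W, t v • x v) * u := fun W t u => by
    simp [f, LinearMap.sum_apply, Finset.sum_mul]
  have hmem : ∀ (W : Finset (Fin n)) (u : 𝒜 kk),
      u ∈ ⨅ v ∈ W, ker (f v) ↔ ∀ v ∈ W, x v * u = 0 := by
    simp [f]
  have hker : ∀ (W : Finset (Fin n)) (t : Fin n → k),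
      ker (∑ v ∈ W, t v • f v) ≤ ⨅ v ∈ W, ker (f v) →
      ∀ u ∈ 𝒜 kk, ((∑ v ∈ W, t v • x v) * u = 0 ↔ ∀ v ∈ W, x v * u = 0) := by
    refine fun W t h u hu => ⟨fun h0 => (hmem W ⟨u, hu⟩).mp (h ?_), fun h0 => ?_⟩
    · rwa [LinearMap.mem_ker, happly]
    · rw [Finset.sum_mul]
      exact Finset.sum_eq_zero fun v hv => by rw [smul_mul_assoc, h0 v hv, smul_zero]
  have hgeneric := genericHolds_ker_sum_smul_le_iInf_ker f (fun W hW w => ?_) Finset.univ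
  · refine hgeneric.mono fun t ht u hu h0 => ?_
    refine eq_zero_of_forall_mul_eq_zero 𝒜 deg (hPD kk (by omega)) (fun i => ⟨1, hx i⟩) hgen
      (by omega) hu fun v => ?_
    exact (hker _ t ht u hu).mp (by simpa using h0) v (Finset.mem_univ v)
  refine (htrans W (hW.mono (hker W)) w).mono fun t ht u hu u' heq => ?_
  have := ht u u' u.2 u'.2 ((hmem W u).mp hu) (by rw [← happly]; simpa [f] using heq)
  simpa [f] using this
end
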